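/- For all positive reals b > a, there exists x > 0 such that A(a,b)/G(a,b) = cosh(x) and I(a,b)/G(a,b) = exp(x/tanh(x) − 1); explicitly, x = (1/2)·log(b/a) works. -/
import Mathlib

noncomputable def A (a b : ℝ) : ℝ := (a + b) / 2
noncomputable def G (a b : ℝ) : ℝ := Real.sqrt (a * b)
noncomputable def I (a b : ℝ) : ℝ := (1 / Real.exp 1) * (a ^ a / b ^ b) ^ (1 / (a - b))

theorem stmt_13 (a b : ℝ) (ha : 0 < a) (hab : a < b) :
    ∃ x : ℝ, x = (1 / 2) * Real.log (b / a) ∧ 0 < x ∧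
      A a b / G a b = Real.cosh x ∧
      I a b / G a b = Real.exp (x / Real.tanh x - 1) := by
  have hb : 0 < b := ha.trans hab
  have hba : 0 < b - a := by linarith
  set x : ℝ := (1 / 2) * Real.log (b / a) with hx
  have hdiv : 1 < b / a := (one_lt_div ha).mpr hab
  have hxpos : 0 < x := by
    have := Real.log_pos hdiv
    positivity
  set u := Real.sqrt a with hu
  set v := Real.sqrt b with hv
  have hu0 : 0 < u := Real.sqrt_pos.mpr ha
  have hv0 : 0 < v := Real.sqrt_pos.mpr hb
  have hu2 : u ^ 2 = a := Real.sq_sqrt ha.le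
  have hv2 : v ^ 2 = b := Real.sq_sqrt hb.le
  have hexp : Real.exp x = v / u := by
    rw [hx, mul_comm, ← Real.rpow_def_of_pos (by positivity),
      ← Real.sqrt_eq_rpow, Real.sqrt_div hb.le a]
  have hexpn : Real.exp (-x) = u / v := by
    rw [Real.exp_neg, hexp, inv_div]
  have hG : G a b = u * v := by
    rw [G, Real.sqrt_mul ha.le]
  have htanh : Real.tanh x = (b - a) / (b + a) := by
    rw [Real.tanh_eq_sinh_div_cosh, Real.sinh_eq, Real.cosh_eq, hexp, hexpn,
      ← hu2, ← hv2]
    field_simp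
  refine ⟨x, rfl, hxpos, ?_, ?_⟩
  · rw [Real.cosh_eq, hexp, hexpn, A, hG, ← hu2, ← hv2]
    field_simp
    ring
  · have hab' : a - b ≠ 0 := by linarith
    have hI : I a b = Real.exp (-1 + (Real.log a * a - Real.log b * b) * (1 / (a - b))) := by
      rw [I, Real.rpow_def_of_pos ha, Real.rpow_def_of_pos hb, ← Real.exp_sub,
        Real.rpow_def_of_pos (Real.exp_pos _), Real.log_exp, Real.exp_add,
        Real.exp_neg, one_div (Real.exp 1), one_div]
    have hG' : G a b = Real.exp ((Real.log a + Real.log b) / 2) := by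
      rw [hG, ← Real.exp_log hu0, ← Real.exp_log hv0, ← Real.exp_add, hu, hv,
        Real.log_sqrt ha.le, Real.log_sqrt hb.le]
      ring_nf
    rw [hI, hG', ← Real.exp_sub, htanh, hx, Real.log_div hb.ne' ha.ne',
      Real.exp_eq_exp]
    have hba' : b + a ≠ 0 := by positivity
    field_simp
    ring
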